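/- arXiv:1911.09604 — 2 statements merged into one kernel-verified Lean document; each statement's English description precedes it below -/
import Mathlib

section
/- (Consistency via cores, converse direction) Suppose: (A1) ‖P_n‖ ≤ M₁, ‖E_n‖ ≤ M₂ uniformly; (A2) E_n P_n x τ-converges to x, norm-boundedly, for all x ∈ X; and (C2) for every u ∈ D(A) there exist ū_n ∈ D(A_n) with (E_n ū_n) and (E_n A_n ū_n) norm-bounded, E_n ū_n → u and E_n A_n ū_n → A u in τ. Assume moreover the inverses A_n^{-1} are bounded uniformly in n in the seminorm sense. Then for all x ∈ A(D(A)), the sequence (E_n A_n^{-1} P_n x) is norm-bounded and τ-converges to A^{-1} x. -/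
open Filter Set Topology

/-- Proposition 4.1, converse direction: (A1), (A2) and (C2), together with uniform
(seminorm and norm) bounds on the inverses `A_n⁻¹`, imply condition (a) at `λ₀ = 0`:
for every `x ∈ A(D(A))`, the sequence `(E_n A_n⁻¹ P_n x)` is norm-bounded and
τ-converges to `A⁻¹ x`. -/
theorem consistency_core_converse_direction
    {X : Type*} [NormedAddCommGroup X] [NormedSpace ℝ X]
    {Xn : ℕ → Type*} [∀ n, NormedAddCommGroup (Xn n)] [∀ n, NormedSpace ℝ (Xn n)]
    {ι : Type*} (p : ι → Seminorm ℝ X) (q : ∀ n, ι → Seminorm ℝ (Xn n))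
    (hple : ∀ i x, p i x ≤ ‖x‖)
    (P : ∀ n, X →L[ℝ] Xn n) (E : ∀ n, Xn n →L[ℝ] X)
    (M₁ M₂ : ℝ)
    -- (A1)
    (hP : ∀ n, ‖P n‖ ≤ M₁) (hE : ∀ n, ‖E n‖ ≤ M₂)
    (hPE : ∀ n, ∀ u : Xn n, P n (E n u) = u)
    -- compatibility of the seminorms with `P_n` and `E_n`
    (hqP : ∀ n i, ∀ z : X, q n i (P n z) ≤ M₁ * p i z)
    (hpE : ∀ n i, ∀ u : Xn n, p i (E n u) ≤ M₂ * q n i u)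
    -- the operators `A`, `A_n` with `0` in the resolvent sets
    (A : X → X) (DA : Set X)
    (Ainv : X →L[ℝ] X) (hAinvA : ∀ u ∈ DA, Ainv (A u) = u)
    (An : ∀ n, Xn n → Xn n) (DAn : ∀ n, Set (Xn n)) (Aninv : ∀ n, Xn n →L[ℝ] Xn n)
    (hAnAninv : ∀ n, ∀ x : Xn n, Aninv n x ∈ DAn n ∧ An n (Aninv n x) = x)
    (hAninvAn : ∀ n, ∀ u ∈ DAn n, Aninv n (An n u) = u)
    -- the inverses `A_n⁻¹` are bounded uniformly in `n`, in the seminorm sense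
    (K : ℝ) (hAninvq : ∀ n i, ∀ u : Xn n, q n i (Aninv n u) ≤ K * q n i u)
    -- and in the norm sense
    (K' : ℝ) (hAninvnorm : ∀ n, ‖Aninv n‖ ≤ K')
    -- (A2)
    (hA2 : ∀ x : X, (∃ C, ∀ n, ‖E n (P n x)‖ ≤ C) ∧
      ∀ i, Tendsto (fun n => p i (E n (P n x) - x)) atTop (𝓝 0))
    -- (C2)
    (hC2 : ∀ u ∈ DA, ∃ ub : ∀ n, Xn n, (∀ n, ub n ∈ DAn n) ∧
      (∃ C, ∀ n, ‖E n (ub n)‖ ≤ C) ∧ (∃ C, ∀ n, ‖E n (An n (ub n))‖ ≤ C) ∧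
      (∀ i, Tendsto (fun n => p i (E n (ub n) - u)) atTop (𝓝 0)) ∧
      (∀ i, Tendsto (fun n => p i (E n (An n (ub n)) - A u)) atTop (𝓝 0))) :
    ∀ x ∈ A '' DA,
      (∃ C, ∀ n, ‖E n (Aninv n (P n x))‖ ≤ C) ∧
      ∀ i, Tendsto (fun n => p i (E n (Aninv n (P n x)) - Ainv x)) atTop (𝓝 0) := by
  rintro x ⟨u, hu, rfl⟩
  obtain ⟨ub, hubD, _, _, hub1, hub2⟩ := hC2 u hu
  have hM₂ : (0:ℝ) ≤ M₂ := le_trans (norm_nonneg _) (hE 0)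
  have hM₁ : (0:ℝ) ≤ M₁ := le_trans (norm_nonneg _) (hP 0)
  have hK' : (0:ℝ) ≤ K' := le_trans (norm_nonneg _) (hAninvnorm 0)
  set K₀ : ℝ := max K 0 with hK₀def
  have hK₀ : (0:ℝ) ≤ K₀ := le_max_right _ _
  have hAninvq' : ∀ n i, ∀ v : Xn n, q n i (Aninv n v) ≤ K₀ * q n i v := fun n i v =>
    le_trans (hAninvq n i v) (mul_le_mul_of_nonneg_right (le_max_left _ _) (apply_nonneg _ _))
  constructor
  · refine ⟨M₂ * (K' * (M₁ * ‖A u‖)), fun n => ?_⟩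
    calc ‖E n (Aninv n (P n (A u)))‖
        ≤ M₂ * ‖Aninv n (P n (A u))‖ := (E n).le_of_opNorm_le (hE n) _
      _ ≤ M₂ * (K' * ‖P n (A u)‖) :=
          mul_le_mul_of_nonneg_left ((Aninv n).le_of_opNorm_le (hAninvnorm n) _) hM₂
      _ ≤ M₂ * (K' * (M₁ * ‖A u‖)) :=
          mul_le_mul_of_nonneg_left
            (mul_le_mul_of_nonneg_left ((P n).le_of_opNorm_le (hP n) _) hK') hM₂
  · rw [hAinvA u hu]
    intro i
    have key : ∀ n, p i (E n (Aninv n (P n (A u))) - u) ≤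
        M₂ * (K₀ * (M₁ * p i (E n (An n (ub n)) - A u))) + p i (E n (ub n) - u) := by
      intro n
      have h1 : E n (Aninv n (P n (A u))) - u
          = E n (Aninv n (P n (A u)) - ub n) + (E n (ub n) - u) := by
        rw [map_sub]; abel
      rw [h1]
      refine le_trans (map_add_le_add (p i) _ _) (add_le_add ?_ le_rfl)
      have h2 : Aninv n (P n (A u)) - ub n = Aninv n (P n (A u) - An n (ub n)) := by
        rw [map_sub, hAninvAn n (ub n) (hubD n)]
      have h3 : P n (A u) - An n (ub n) = P n (A u - E n (An n (ub n))) := by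
        rw [map_sub, hPE n (An n (ub n))]
      calc p i (E n (Aninv n (P n (A u)) - ub n))
          ≤ M₂ * q n i (Aninv n (P n (A u)) - ub n) := hpE n i _
        _ ≤ M₂ * (K₀ * q n i (P n (A u) - An n (ub n))) := by
            rw [h2]; exact mul_le_mul_of_nonneg_left (hAninvq' n i _) hM₂
        _ ≤ M₂ * (K₀ * (M₁ * p i (A u - E n (An n (ub n))))) := by
            refine mul_le_mul_of_nonneg_left (mul_le_mul_of_nonneg_left ?_ hK₀) hM₂
            rw [h3]; exact hqP n i _
        _ = M₂ * (K₀ * (M₁ * p i (E n (An n (ub n)) - A u))) := by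
            rw [show A u - E n (An n (ub n)) = -(E n (An n (ub n)) - A u) by abel, map_neg_eq_map]
    have hlim : Tendsto (fun n => M₂ * (K₀ * (M₁ * p i (E n (An n (ub n)) - A u)))
        + p i (E n (ub n) - u)) atTop (𝓝 (M₂ * (K₀ * (M₁ * 0)) + 0)) :=
      (((hub2 i).const_mul M₁).const_mul K₀ |>.const_mul M₂).add (hub1 i)
    rw [show M₂ * (K₀ * (M₁ * (0:ℝ))) + 0 = 0 by ring] at hlim
    exact squeeze_zero (fun n => apply_nonneg _ _) key hlim
end

section
/- Let T_n(t) be semigroups with ‖T_n(t)‖ ≤ M e^{ωt} on subspaces Z_n, sn a seminorm with sn ≤ ‖·‖ on Z, and suppose f_n : [0, t₀] → Z are functions with ‖f_n(s)‖ ≤ C uniformly and sn(f_n(s)) → 0 uniformly on [0,t₀], and suppose the family {T_n(t)} is bi-equicontinuous so that sn-smallness of norm-bounded inputs propagates: there is a function ε ↦ δ(ε) such that sn(T_n(t)z) ≤ ε whenever ‖z‖ ≤ C and sn'(z) ≤ δ(ε) for an appropriate seminorm sn'. Then sn(∫₀^t T_n(t−s) f_n(s) ds) → 0 as n → ∞,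 uniformly for t ∈ [0, t₀]. -/
open Set intervalIntegral MeasureTheory

/-!
The seminorm `sn` is continuous and convex, so the mean of the integrand over `[0, t]` lies in
the closed sublevel set of the pointwise bound, whence `sn(∫₀ᵗ g) ≤ t · sup sn ∘ g`.
By bi-equicontinuity, once `sn'(f_n(s))` is uniformly small, `sn(T_n(t - s) f_n(s)) ≤ ε / t₀`
for all `0 ≤ s ≤ t ≤ t₀`, and the integral is at most `ε`.
-/

theorem Seminorm.continuous_of_le_norm {E : Type*} [SeminormedAddCommGroup E] [NormedSpace ℝ E]
    {q : Seminorm ℝ E} (hq : ∀ z, q z ≤ ‖z‖) : Continuous q :=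
  Seminorm.continuous_of_le (q := normSeminorm ℝ E) continuous_norm hq

theorem Seminorm.intervalIntegral_le_of_forall_le {E : Type*} [NormedAddCommGroup E]
    [NormedSpace ℝ E] [CompleteSpace E] {q : Seminorm ℝ E} (hq : Continuous q)
    {g : ℝ → E} {a b ε : ℝ} (hab : a ≤ b) (hle : ∀ s ∈ Ioc a b, q (g s) ≤ ε) :
    q (∫ s in a..b, g s) ≤ ε * (b - a) := by
  rcases hab.eq_or_lt with rfl | hab'
  · simp
  have hε : 0 ≤ ε := (apply_nonneg q _).trans (hle b ⟨hab', le_rfl⟩)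
  by_cases hint : IntervalIntegrable g volume a b
  swap
  · rw [integral_undef hint, map_zero]
    exact mul_nonneg hε (sub_nonneg.2 hab)
  have hvol : volume (Ioc a b) ≠ ⊤ := by simp [Real.volume_Ioc]
  have hmean : (⨍ s in Ioc a b, g s) ∈ q.closedBall 0 ε :=
    (q.convex_closedBall 0 ε).set_average_mem
      (by simpa only [Seminorm.closedBall_zero_eq] using isClosed_le hq continuous_const)
      (by simp [Real.volume_Ioc, hab']) hvol
      ((ae_restrict_iff' measurableSet_Ioc).2
        (ae_of_all _ fun s hs => q.mem_closedBall_zero.2 (hle s hs)))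
      hint.1
  rw [integral_of_le hab, ← measure_smul_setAverage _ hvol, Real.volume_real_Ioc_of_le hab,
    map_smul_eq_mul, Real.norm_of_nonneg (sub_nonneg.2 hab), mul_comm]
  exact mul_le_mul_of_nonneg_right (q.mem_closedBall_zero.1 hmean) (sub_nonneg.2 hab)

theorem convolution_integral_tau_convergence_general
    {Z : Type*} [NormedAddCommGroup Z] [NormedSpace ℝ Z] [CompleteSpace Z]
    {ι : Type*} (p : ι → Seminorm ℝ Z)
    (hple : ∀ j z, p j z ≤ ‖z‖)
    (Tn : ℕ → ℝ → Z →L[ℝ] Z)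
    (t₀ : ℝ) (ht₀ : 0 < t₀)
    (f : ℕ → ℝ → Z) (C : ℝ)
    -- uniform norm boundedness
    (hfbdd : ∀ n, ∀ s ∈ Icc (0:ℝ) t₀, ‖f n s‖ ≤ C)
    -- `sn(f_n(s)) → 0` uniformly on `[0, t₀]` (τ-convergence to `0`)
    (hfconv : ∀ j, ∀ ε > (0:ℝ), ∃ N, ∀ n ≥ N, ∀ s ∈ Icc (0:ℝ) t₀, p j (f n s) < ε)
    (i : ι)
    -- uniform bi-equicontinuity of the family `(T_n)`: seminorm-smallness of
    -- norm-bounded inputs propagates through `T_n(t)`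
    (hbieq : ∀ ε > (0:ℝ), ∃ (j : ι) (δ : ℝ), 0 < δ ∧
      ∀ n, ∀ t ∈ Icc (0:ℝ) t₀, ∀ z : Z, ‖z‖ ≤ C → p j z ≤ δ → p i (Tn n t z) ≤ ε) :
    ∀ ε > (0:ℝ), ∃ N, ∀ n ≥ N, ∀ t ∈ Icc (0:ℝ) t₀,
      p i (∫ s in (0:ℝ)..t, Tn n (t - s) (f n s)) ≤ ε := by
  intro ε hε
  obtain ⟨j, δ, hδ, hT⟩ := hbieq (ε / t₀) (div_pos hε ht₀)
  obtain ⟨N, hN⟩ := hfconv j δ hδ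
  refine ⟨N, fun n hn t ⟨ht0, htt₀⟩ => ?_⟩
  have hpointwise : ∀ s ∈ Ioc 0 t, p i (Tn n (t - s) (f n s)) ≤ ε / t₀ :=
    fun s ⟨hs0, hst⟩ =>
      have hs : s ∈ Icc 0 t₀ := ⟨hs0.le, hst.trans htt₀⟩
      hT n (t - s) ⟨by linarith, by linarith⟩ (f n s) (hfbdd n s hs) (hN n hn s hs).le
  calc p i (∫ s in (0:ℝ)..t, Tn n (t - s) (f n s))
      ≤ ε / t₀ * (t - 0) :=
        Seminorm.intervalIntegral_le_of_forall_le (Seminorm.continuous_of_le_norm (hple i))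
          ht0 hpointwise
    _ ≤ ε / t₀ * t₀ := by gcongr; linarith
    _ = ε := div_mul_cancel₀ ε ht₀.ne'

/-- Uniform τ-convergence of convolution integrals: if the `f_n` are uniformly
norm-bounded with seminorms tending to `0` uniformly on `[0, t₀]`, and the family
`(T_n)` is uniformly (locally) bi-equicontinuous, then
`sn(∫₀ᵗ T_n(t-s) f_n(s) ds) → 0` uniformly for `t ∈ [0, t₀]`. -/
theorem convolution_integral_tau_convergence
    {Z : Type*} [NormedAddCommGroup Z] [NormedSpace ℝ Z] [CompleteSpace Z]
    {ι : Type*} (p : ι → Seminorm ℝ Z)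
    (hple : ∀ j z, p j z ≤ ‖z‖)
    (Tn : ℕ → ℝ → Z →L[ℝ] Z) (M ω : ℝ) (hM : 1 ≤ M)
    (hTnbound : ∀ n, ∀ t ≥ (0:ℝ), ‖Tn n t‖ ≤ M * Real.exp (ω * t))
    (t₀ : ℝ) (ht₀ : 0 < t₀)
    (f : ℕ → ℝ → Z) (C : ℝ)
    -- uniform norm boundedness
    (hfbdd : ∀ n, ∀ s ∈ Icc (0:ℝ) t₀, ‖f n s‖ ≤ C)
    -- integrability (strong measurability of the integrands)
    (hfint : ∀ n, ∀ t ∈ Icc (0:ℝ) t₀,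
      IntervalIntegrable (fun s => Tn n (t - s) (f n s)) MeasureTheory.volume 0 t)
    -- `sn(f_n(s)) → 0` uniformly on `[0, t₀]` (τ-convergence to `0`)
    (hfconv : ∀ j, ∀ ε > (0:ℝ), ∃ N, ∀ n ≥ N, ∀ s ∈ Icc (0:ℝ) t₀, p j (f n s) < ε)
    (i : ι)
    -- uniform bi-equicontinuity of the family `(T_n)`: seminorm-smallness of
    -- norm-bounded inputs propagates through `T_n(t)`
    (hbieq : ∀ ε > (0:ℝ), ∃ (j : ι) (δ : ℝ), 0 < δ ∧
      ∀ n, ∀ t ∈ Icc (0:ℝ) t₀, ∀ z : Z, ‖z‖ ≤ C → p j z ≤ δ → p i (Tn n t z) ≤ ε) :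
    ∀ ε > (0:ℝ), ∃ N, ∀ n ≥ N, ∀ t ∈ Icc (0:ℝ) t₀,
      p i (∫ s in (0:ℝ)..t, Tn n (t - s) (f n s)) ≤ ε :=
  convolution_integral_tau_convergence_general p hple Tn t₀ ht₀ f C hfbdd hfconv i hbieq
end
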